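/- Let (J,γ) be a nilpotent metrised real Jordan algebra whose trace form γ is definite (positive definite or negative definite). Then either dim J ≤ 1 (in which case the multiplication of J is identically zero), or (J,γ) is reducible, i.e., J is the direct sum of two nonzero mutually γ-orthogonal ideals. In particular, an irreducible nilpotent metrised Jordan algebra with definite trace form has dimension at most 1. -/

import Mathlib

/-!
Let `M = J∙J` be the span of all products. Because `γ` is associative, the `γ`-orthogonal of `M`
is the annihilator `ker mul`, and because `γ` is definite every subspace is complemented by its
`γ`-orthogonal, so `J = M ⊕ ker mul` with both summands ideals. If `M ≠ 0` then `J ≠ 0`, and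
nilpotency forces `ker mul = C₁ ≠ 0`, so this splitting is a reducible decomposition. If `M = 0`
the multiplication vanishes, every subspace is an ideal, and once `dim J ≥ 2` any line together
with its orthogonal complement splits `J`.
-/

open Module

/-- The central ascending series of a commutative algebra with multiplication `mul`:
`C₀ = {0}`, `C_{k+1} = {x : x∙y ∈ C_k for all y}`. -/
def cas {A : Type*} [AddCommGroup A] [Module ℝ A]
    (mul : A →ₗ[ℝ] A →ₗ[ℝ] A) : ℕ → Submodule ℝ A
  | 0 => ⊥
  | (k + 1) =>
    { carrier := {x | ∀ y, mul x y ∈ cas mul k}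
      add_mem' := fun {a b} ha hb y => by
        simpa [map_add, LinearMap.add_apply] using (cas mul k).add_mem (ha y) (hb y)
      zero_mem' := fun y => by simp
      smul_mem' := fun c a ha y => by
        simpa [map_smul, LinearMap.smul_apply] using (cas mul k).smul_mem c (ha y) }

/-- `(J,γ)` is reducible: `J` is the direct sum of two nonzero ideals that are mutually
`γ`-orthogonal. -/
def Reducible {J : Type*} [AddCommGroup J] [Module ℝ J]
    (mul : J →ₗ[ℝ] J →ₗ[ℝ] J) (γ : J →ₗ[ℝ] J →ₗ[ℝ] ℝ) : Prop :=
  ∃ I I' : Submodule ℝ J, I ≠ ⊥ ∧ I' ≠ ⊥ ∧ IsCompl I I' ∧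
    (∀ x ∈ I, ∀ y, mul x y ∈ I) ∧ (∀ x ∈ I', ∀ y, mul x y ∈ I') ∧
    (∀ x ∈ I, ∀ y ∈ I', γ x y = 0)

open LinearMap (ker mem_ker)
open LinearMap.BilinForm (orthogonal mem_orthogonal_iff)

section Orthogonal

variable {K V : Type*} [Field K] [AddCommGroup V] [Module K V] [FiniteDimensional K V]
  {γ : LinearMap.BilinForm K V}

theorem isCompl_orthogonal_of_anisotropic (hrefl : γ.IsRefl) (hγ : ∀ x, γ x x = 0 → x = 0)
    (W : Submodule K V) : IsCompl W (γ.orthogonal W) :=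
  (LinearMap.BilinForm.isCompl_orthogonal_iff_disjoint hrefl).2 <|
    Submodule.disjoint_def.2 fun x hxW hx => hγ x (mem_orthogonal_iff.1 hx x hxW)

end Orthogonal

section Metrised

variable {R J : Type*} [CommRing R] [AddCommGroup J] [Module R J]
  {mul : J →ₗ[R] J →ₗ[R] J} {γ : LinearMap.BilinForm R J}

theorem orthogonal_map₂_top_eq_ker (hsymm : ∀ u v, γ u v = γ v u)
    (htrace : ∀ u v w, γ (mul u v) w = γ u (mul v w)) (hγ : ∀ x, γ x x = 0 → x = 0) :
    γ.orthogonal (Submodule.map₂ mul ⊤ ⊤) = ker mul := by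
  apply le_antisymm
  · intro y hy
    refine mem_ker.2 (LinearMap.ext fun u => hγ _ ?_)
    -- `γ (y∙u) (y∙u) = γ (u∙(y∙u)) y`, and `u∙(y∙u) ∈ J∙J`
    rw [htrace, hsymm]
    exact mem_orthogonal_iff.1 hy _ (Submodule.apply_mem_map₂ _ trivial trivial)
  · intro a ha
    refine mem_orthogonal_iff.2 fun n hn => ?_
    refine Submodule.map₂_le (r := ker (γ.flip a)) |>.2 (fun u _ v _ => ?_) hn
    rw [mem_ker, LinearMap.BilinForm.flip_apply, hsymm, ← htrace, mem_ker.1 ha,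
      LinearMap.zero_apply, map_zero, LinearMap.zero_apply]

end Metrised

section Decomposition

variable {J : Type*} [AddCommGroup J] [Module ℝ J] [FiniteDimensional ℝ J]
  {mul : J →ₗ[ℝ] J →ₗ[ℝ] J} {γ : LinearMap.BilinForm ℝ J}

theorem reducible_of_orthogonal (hrefl : γ.IsRefl) (hγ : ∀ x, γ x x = 0 → x = 0)
    {I : Submodule ℝ J} (hI : I ≠ ⊥) (hI' : γ.orthogonal I ≠ ⊥)
    (hIideal : ∀ x ∈ I, ∀ y, mul x y ∈ I)
    (hI'ideal : ∀ x ∈ γ.orthogonal I, ∀ y, mul x y ∈ γ.orthogonal I) :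
    Reducible mul γ :=
  ⟨I, γ.orthogonal I, hI, hI', isCompl_orthogonal_of_anisotropic hrefl hγ I, hIideal, hI'ideal,
    fun _ hx _ hy => mem_orthogonal_iff.1 hy _ hx⟩

theorem reducible_of_mul_eq_zero (hmul : ∀ x y, mul x y = 0) (hdim : 1 < finrank ℝ J)
    (hrefl : γ.IsRefl) (hγ : ∀ x, γ x x = 0 → x = 0) : Reducible mul γ := by
  have : Nontrivial J := Module.nontrivial_of_finrank_pos (R := ℝ) (by omega)
  obtain ⟨x, hx⟩ := exists_ne (0 : J)
  have hline : finrank ℝ (ℝ ∙ x) = 1 := finrank_span_singleton hx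
  refine reducible_of_orthogonal hrefl hγ (I := ℝ ∙ x) ?_ ?_ (by simp [hmul]) (by simp [hmul])
  · simpa [Submodule.span_singleton_eq_bot] using hx
  · intro hbot
    have hsum := Submodule.finrank_add_eq_of_isCompl <|
      isCompl_orthogonal_of_anisotropic hrefl hγ (ℝ ∙ x)
    rw [hbot, finrank_bot, hline] at hsum
    omega

end Decomposition

theorem ker_ne_bot_of_cas_eq_top {J : Type*} [AddCommGroup J] [Module ℝ J] [Nontrivial J]
    {mul : J →ₗ[ℝ] J →ₗ[ℝ] J} (hnilp : ∃ m, cas mul m = ⊤) : ker mul ≠ ⊥ := by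
  intro hker
  have hcas : ∀ k, cas mul k = ⊥ := by
    intro k
    induction k with
    | zero => rfl
    | succ k ih =>
      refine eq_bot_iff.2 fun x hx => hker ▸ mem_ker.2 (LinearMap.ext fun y => ?_)
      simpa [ih] using hx y
  obtain ⟨m, hm⟩ := hnilp
  exact bot_ne_top (hcas m ▸ hm)

theorem stmt_11_general {J : Type*} [AddCommGroup J] [Module ℝ J] [FiniteDimensional ℝ J]
    (mul : J →ₗ[ℝ] J →ₗ[ℝ] J)
    (γ : J →ₗ[ℝ] J →ₗ[ℝ] ℝ)
    (hsymm : ∀ u v, γ u v = γ v u)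
    (htrace : ∀ u v w, γ (mul u v) w = γ u (mul v w))
    (hnilp : ∃ m, cas mul m = ⊤)
    (hdef : (∀ x : J, x ≠ 0 → 0 < γ x x) ∨ (∀ x : J, x ≠ 0 → γ x x < 0)) :
    (finrank ℝ J ≤ 1 ∧ ∀ x y : J, mul x y = 0) ∨ Reducible mul γ := by
  have hrefl : γ.IsRefl := fun u v h => hsymm u v ▸ h
  have hγ : ∀ x, γ x x = 0 → x = 0 := fun x hx => by
    by_contra hx0
    rcases hdef with h | h
    exacts [(h x hx0).ne' hx, (h x hx0).ne hx]
  set M := Submodule.map₂ mul ⊤ ⊤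
  by_cases hM : M = ⊥
  · have hmul : ∀ x y, mul x y = 0 := fun x y =>
      (Submodule.mem_bot ℝ).1 (hM ▸ Submodule.apply_mem_map₂ mul trivial trivial)
    by_cases hdim : finrank ℝ J ≤ 1
    · exact .inl ⟨hdim, hmul⟩
    · exact .inr (reducible_of_mul_eq_zero hmul (by omega) hrefl hγ)
  obtain ⟨z, -, hz⟩ := Submodule.ne_bot_iff M |>.1 hM
  have : Nontrivial J := ⟨⟨z, 0, hz⟩⟩
  have hMperp : orthogonal γ M = ker mul := orthogonal_map₂_top_eq_ker hsymm htrace hγ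
  refine .inr (reducible_of_orthogonal hrefl hγ hM (hMperp ▸ ker_ne_bot_of_cas_eq_top hnilp)
    (fun _ _ _ => Submodule.apply_mem_map₂ mul trivial trivial) ?_)
  rw [hMperp]
  intro a ha b
  simp [mem_ker.1 ha]

/-- a nilpotent metrised real Jordan algebra `(J,γ)` with definite trace form
either has `dim J ≤ 1` (in which case the multiplication is identically zero) or is
reducible. -/
theorem stmt_11 {J : Type*} [AddCommGroup J] [Module ℝ J] [FiniteDimensional ℝ J]
    (mul : J →ₗ[ℝ] J →ₗ[ℝ] J)
    (hcomm : ∀ u v, mul u v = mul v u)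
    (hjordan : ∀ u v, mul u (mul (mul u u) v) = mul (mul u u) (mul u v))
    (γ : J →ₗ[ℝ] J →ₗ[ℝ] ℝ)
    (hsymm : ∀ u v, γ u v = γ v u)
    (hnd : ∀ u, (∀ v, γ u v = 0) → u = 0)
    (htrace : ∀ u v w, γ (mul u v) w = γ u (mul v w))
    (hnilp : ∃ m, cas mul m = ⊤)
    (hdef : (∀ x : J, x ≠ 0 → 0 < γ x x) ∨ (∀ x : J, x ≠ 0 → γ x x < 0)) :
    (finrank ℝ J ≤ 1 ∧ ∀ x y : J, mul x y = 0) ∨ Reducible mul γ :=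
  stmt_11_general mul γ hsymm htrace hnilp hdef
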